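/- For starting sequences of n 2's and 3's with n ≤ 4, the maximal extension length before reaching the first 1 satisfies μ(1)=1, μ(2)=4, μ(3)=5, μ(4)=8. -/

import Mathlib

/-!
The curling number of `S` only ever involves blocks `Y` that are suffixes of `S`, and its
exponent is at most `S.length`; so it agrees with a computable search, `curlingNumber`.
After this replacement, `μ(n)` for `n ≤ 4` is a finite computation: run the curling extension
from each of the `2 ^ n` starting words until the first `1`.
-/

/-- The curling number of a finite sequence: the largest `k` such that
`S = X ++ Y^k` with `Y` nonempty (where `Y^k` is `k` concatenated copies of `Y`). -/
noncomputable def curl (S : List ℤ) : ℕ :=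
  sSup {k | ∃ X Y : List ℤ, Y ≠ [] ∧ S = X ++ (List.replicate k Y).flatten}

/-- One step of the curling extension: append the curling number. -/
noncomputable def curlStep (S : List ℤ) : List ℤ := S ++ [(curl S : ℤ)]

noncomputable def mu (n : ℕ) : ℕ :=
  sSup {L | ∃ S : List ℤ, S.length = n ∧ (∀ x ∈ S, x = 2 ∨ x = 3) ∧ n ≤ L ∧
    (∀ i, i < L - n → curl (curlStep^[i] S) ≠ 1) ∧ curl (curlStep^[L - n] S) = 1}

namespace List

variable {α : Type*}

theorem mem_sections_replicate {l S : List α} {n : ℕ} :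
    S ∈ (replicate n l).sections ↔ S.length = n ∧ ∀ x ∈ S, x ∈ l := by
  rw [mem_sections]
  induction S generalizing n with
  | nil => cases n <;> simp
  | cons a S ih => cases n <;> simp [replicate_succ, ih, and_left_comm]

theorem suffix_flatten_replicate {Y : List α} {k : ℕ} (hk : k ≠ 0) :
    Y <:+ (replicate k Y).flatten := by
  obtain ⟨j, rfl⟩ := Nat.exists_eq_succ_of_ne_zero hk
  rw [replicate_succ', flatten_append, flatten_singleton]
  exact suffix_append _ _

theorem le_length_of_eq_append_flatten_replicate {S X Y : List α} {k : ℕ} (hY : Y ≠ [])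
    (h : S = X ++ (replicate k Y).flatten) : k ≤ S.length := by
  have hY : 1 ≤ Y.length := length_pos_iff.2 hY
  have : (replicate k Y).flatten.length = k * Y.length := by simp
  rw [h, length_append, this]
  nlinarith

theorem exists_eq_append_flatten_replicate_iff {S : List α} {k : ℕ} (hk : k ≠ 0) :
    (∃ X Y : List α, Y ≠ [] ∧ S = X ++ (replicate k Y).flatten) ↔
      ∃ Y ∈ S.tails, Y ≠ [] ∧ (replicate k Y).flatten <:+ S := by
  constructor
  · rintro ⟨X, Y, hY, rfl⟩
    have hsuf : (replicate k Y).flatten <:+ X ++ (replicate k Y).flatten := suffix_append _ _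
    exact ⟨Y, (mem_tails _ _).2 ((suffix_flatten_replicate hk).trans hsuf), hY, hsuf⟩
  · rintro ⟨Y, -, hY, X, hX⟩
    exact ⟨X, Y, hY, hX.symm⟩

end List

def curlingNumber (S : List ℤ) : ℕ :=
  Nat.findGreatest (fun k => ∃ Y ∈ S.tails, Y ≠ [] ∧ (List.replicate k Y).flatten <:+ S) S.length

theorem curl_eq_curlingNumber : curl = curlingNumber := by
  funext S
  set A := {k | ∃ X Y : List ℤ, Y ≠ [] ∧ S = X ++ (List.replicate k Y).flatten}
  have hbdd : ∀ k ∈ A, k ≤ S.length := fun k ⟨_, _, hY, h⟩ =>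
    List.le_length_of_eq_append_flatten_replicate hY h
  have hzero : 0 ∈ A := ⟨S, [0], by simp, by simp⟩
  have hcurl : curl S ∈ A := Nat.sSup_mem ⟨0, hzero⟩ ⟨_, hbdd⟩
  apply le_antisymm
  · obtain h | h := eq_or_ne (curl S) 0
    · simp [h]
    exact Nat.le_findGreatest (hbdd _ hcurl)
      ((List.exists_eq_append_flatten_replicate_iff h).1 hcurl)
  · obtain h | h := eq_or_ne (curlingNumber S) 0
    · simp [h]
    exact le_csSup ⟨_, hbdd⟩
      ((List.exists_eq_append_flatten_replicate_iff h).2 (Nat.findGreatest_of_ne_zero rfl h))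

def extend (S : List ℤ) : List ℤ := S ++ [(curlingNumber S : ℤ)]

theorem curlStep_eq_extend : curlStep = extend := by
  funext S
  rw [curlStep, extend, curl_eq_curlingNumber]

theorem mu_eq_of_witness_of_bound {n M : ℕ} (hnM : n ≤ M) (S₀ : List ℤ)
    (hS₀ : S₀ ∈ (List.replicate n [2, 3]).sections)
    (hS₀_ne : ∀ i < M - n, curlingNumber (extend^[i] S₀) ≠ 1)
    (hS₀_eq : curlingNumber (extend^[M - n] S₀) = 1)
    (hbound : ∀ S ∈ (List.replicate n [2, 3]).sections,
      ∃ t < M - n + 1, curlingNumber (extend^[t] S) = 1) :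
    mu n = M := by
  have hmem_iff (S : List ℤ) : S ∈ (List.replicate n [2, 3]).sections ↔
      S.length = n ∧ ∀ x ∈ S, x = 2 ∨ x = 3 := by
    simp [List.mem_sections_replicate]
  rw [mu, curlStep_eq_extend, curl_eq_curlingNumber]
  refine IsGreatest.csSup_eq ⟨?_, ?_⟩
  · obtain ⟨hlen, h23⟩ := (hmem_iff S₀).1 hS₀
    exact ⟨S₀, hlen, h23, hnM, hS₀_ne, hS₀_eq⟩
  · rintro L ⟨S, hlen, h23, -, hne, -⟩
    obtain ⟨t, ht, hone⟩ := hbound S ((hmem_iff S).2 ⟨hlen, h23⟩)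
    by_contra! hlt
    exact hne t (by omega) hone

theorem stmt15 : mu 1 = 1 ∧ mu 2 = 4 ∧ mu 3 = 5 ∧ mu 4 = 8 := by
  refine ⟨mu_eq_of_witness_of_bound ?_ [2] ?_ ?_ ?_ ?_,
    mu_eq_of_witness_of_bound ?_ [2, 2] ?_ ?_ ?_ ?_,
    mu_eq_of_witness_of_bound ?_ [3, 2, 2] ?_ ?_ ?_ ?_,
    mu_eq_of_witness_of_bound ?_ [2, 3, 2, 3] ?_ ?_ ?_ ?_⟩ <;> decide
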